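/- arXiv:2512.12599 — 2 statements merged into one kernel-verified Lean document; each statement's English description precedes it below -/
import Mathlib

section
/- Let A and B be similar real symmetric n×n matrices with spectral decompositions A = Σ_{k=1}^s λ_k P_k P_k^T and B = Σ_{k=1}^s λ_k R_k R_k^T (same distinct eigenvalues λ₁,…,λ_s). If α, β ∈ ℝ^n and A + αα^T is similar to B + ββ^T, then ‖P_k^T α‖ = ‖R_k^T β‖ for all k = 1,…,s. -/
open Matrix Polynomial

lemma my_eval_charpoly {n : ℕ} (M : Matrix (Fin n) (Fin n) ℝ) (x : ℝ) :
    M.charpoly.eval x = (x • (1 : Matrix (Fin n) (Fin n) ℝ) - M).det := by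
  rw [Matrix.charpoly, eval_det, matPolyEquiv_charmatrix]
  simp only [eval_sub, eval_X, eval_C, Matrix.scalar, smul_eq_diagonal_mul, mul_one,
    RingHom.comp_apply, diagonalRingHom_apply, Pi.constRingHom_apply]
  rfl

lemma resolvent_det {n s : ℕ} (A : Matrix (Fin n) (Fin n) ℝ)
    (hA : A.IsSymm)
    (lam : Fin s → ℝ) (r : Fin s → ℕ)
    (P : ∀ k : Fin s, Matrix (Fin n) (Fin (r k)) ℝ)
    (hP2 : ∀ k, A * P k = lam k • P k)
    (hPcomp : ∑ k, P k * (P k)ᵀ = 1)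
    (α : Fin n → ℝ) (x : ℝ) (hx : ∀ k, x ≠ lam k) :
    (x • (1 : Matrix (Fin n) (Fin n) ℝ) - (A + vecMulVec α α)).det
      = (x • (1 : Matrix (Fin n) (Fin n) ℝ) - A).det
        * (1 - ∑ k, (x - lam k)⁻¹ * (α ⬝ᵥ (P k * (P k)ᵀ) *ᵥ α))
      ∧ (x • (1 : Matrix (Fin n) (Fin n) ℝ) - A).det ≠ 0 := by
  have hxk : ∀ k, x - lam k ≠ 0 := fun k => sub_ne_zero.2 (hx k)
  set N : Matrix (Fin n) (Fin n) ℝ := ∑ k, (x - lam k)⁻¹ • (P k * (P k)ᵀ) with hN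
  have hP2' : ∀ k, (P k)ᵀ * A = lam k • (P k)ᵀ := by
    intro k
    have := congrArg Matrix.transpose (hP2 k)
    rw [Matrix.transpose_mul, Matrix.transpose_smul, hA.eq] at this
    exact this
  have h1 : (x • 1 - A) * N = 1 := by
    rw [hN, Finset.mul_sum,
      Finset.sum_congr rfl (fun k (_ : k ∈ Finset.univ) => by
        rw [Matrix.mul_smul, Matrix.sub_mul, Matrix.smul_mul, Matrix.one_mul,
          ← Matrix.mul_assoc, hP2 k, Matrix.smul_mul, ← sub_smul, inv_smul_smul₀ (hxk k)]),
      hPcomp]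
  have h2 : N * (x • 1 - A) = 1 := by
    rw [hN, Finset.sum_mul,
      Finset.sum_congr rfl (fun k (_ : k ∈ Finset.univ) => by
        rw [Matrix.smul_mul, Matrix.mul_sub, Matrix.mul_smul, Matrix.mul_one,
          Matrix.mul_assoc, hP2' k, Matrix.mul_smul, ← sub_smul, inv_smul_smul₀ (hxk k)]),
      hPcomp]
  have hdet : (x • (1 : Matrix (Fin n) (Fin n) ℝ) - A).det ≠ 0 :=
    (Matrix.isUnit_det_of_right_inverse h1).ne_zero
  refine ⟨?_, hdet⟩
  have key : x • (1 : Matrix (Fin n) (Fin n) ℝ) - (A + vecMulVec α α)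
      = (x • 1 - A) * (1 - N * vecMulVec α α) := by
    rw [Matrix.mul_sub, Matrix.mul_one, ← Matrix.mul_assoc, h1, Matrix.one_mul]
    abel
  rw [key, Matrix.det_mul]
  congr 1
  have hvv : N * vecMulVec α α = Matrix.replicateCol (Fin 1) (N *ᵥ α) * Matrix.replicateRow (Fin 1) α := by
    rw [Matrix.vecMulVec_eq (Fin 1), ← Matrix.mul_assoc, ← Matrix.replicateCol_mulVec]
    rfl
  have : (1 : Matrix (Fin n) (Fin n) ℝ) - N * vecMulVec α α
      = 1 + Matrix.replicateCol (Fin 1) (-(N *ᵥ α)) * Matrix.replicateRow (Fin 1) α := by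
    have hc : Matrix.replicateCol (Fin 1) (-(N *ᵥ α)) = -(Matrix.replicateCol (Fin 1) (N *ᵥ α)) := by
      ext i j; simp
    rw [hvv, sub_eq_add_neg, ← Matrix.neg_mul, hc]
  rw [this]
  erw [Matrix.det_one_add_replicateCol_mul_replicateRow (ι := Fin 1)]
  have hNva : α ⬝ᵥ N *ᵥ α = ∑ k, (x - lam k)⁻¹ * (α ⬝ᵥ (P k * (P k)ᵀ) *ᵥ α) := by
    have : N *ᵥ α = ∑ k, (x - lam k)⁻¹ • ((P k * (P k)ᵀ) *ᵥ α) := by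
      ext i
      simp only [hN, Matrix.mulVec, dotProduct, Matrix.sum_apply, Matrix.smul_apply,
        smul_eq_mul, Finset.sum_mul, Finset.sum_apply, Pi.smul_apply, Matrix.mul_apply]
      rw [Finset.sum_comm]
      refine Finset.sum_congr rfl fun k _ => ?_
      simp only [Finset.mul_sum, Finset.sum_mul]
      exact Finset.sum_congr rfl fun _ _ => Finset.sum_congr rfl fun _ _ => by ring
    rw [this]
    simp only [dotProduct, Finset.sum_apply, Pi.smul_apply, smul_eq_mul, Finset.mul_sum]
    rw [Finset.sum_comm]
    exact Finset.sum_congr rfl fun k _ => Finset.sum_congr rfl fun _ _ => by ring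
  rw [dotProduct_neg, hNva]
  ring
theorem stmt_3 (n s : ℕ) (A B : Matrix (Fin n) (Fin n) ℝ)
    (hA : A.IsSymm) (hB : B.IsSymm)
    (lam : Fin s → ℝ) (hlam : Function.Injective lam)
    (r : Fin s → ℕ)
    (P : ∀ k : Fin s, Matrix (Fin n) (Fin (r k)) ℝ)
    (R : ∀ k : Fin s, Matrix (Fin n) (Fin (r k)) ℝ)
    (hP1 : ∀ k, (P k)ᵀ * P k = 1) (hR1 : ∀ k, (R k)ᵀ * R k = 1)
    (hP2 : ∀ k, A * P k = lam k • P k) (hR2 : ∀ k, B * R k = lam k • R k)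
    (hPsum : A = ∑ k, lam k • (P k * (P k)ᵀ))
    (hRsum : B = ∑ k, lam k • (R k * (R k)ᵀ))
    (hPcomp : ∑ k, P k * (P k)ᵀ = 1) (hRcomp : ∑ k, R k * (R k)ᵀ = 1)
    (α β : Fin n → ℝ)
    (hsim : A.charpoly = B.charpoly)
    (hsim' : (A + Matrix.vecMulVec α α).charpoly = (B + Matrix.vecMulVec β β).charpoly) :
    ∀ k, ((P k)ᵀ.mulVec α) ⬝ᵥ ((P k)ᵀ.mulVec α) = ((R k)ᵀ.mulVec β) ⬝ᵥ ((R k)ᵀ.mulVec β) := by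
  set a : Fin s → ℝ := fun k => α ⬝ᵥ (P k * (P k)ᵀ) *ᵥ α with ha
  set b : Fin s → ℝ := fun k => β ⬝ᵥ (R k * (R k)ᵀ) *ᵥ β with hb
  have hsums : ∀ x : ℝ, (∀ k, x ≠ lam k) →
      ∑ k, (x - lam k)⁻¹ * (a k - b k) = 0 := by
    intro x hx
    obtain ⟨eA, dA⟩ := resolvent_det A hA lam r P hP2 hPcomp α x hx
    obtain ⟨eB, dB⟩ := resolvent_det B hB lam r R hR2 hRcomp β x hx
    have hdAB : (x • (1 : Matrix (Fin n) (Fin n) ℝ) - A).det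
        = (x • (1 : Matrix (Fin n) (Fin n) ℝ) - B).det := by
      rw [← my_eval_charpoly, ← my_eval_charpoly, hsim]
    have h' : (x • (1 : Matrix (Fin n) (Fin n) ℝ) - (A + vecMulVec α α)).det
        = (x • (1 : Matrix (Fin n) (Fin n) ℝ) - (B + vecMulVec β β)).det := by
      rw [← my_eval_charpoly, ← my_eval_charpoly, hsim']
    rw [eA, eB, ← hdAB] at h'
    have h2 := mul_left_cancel₀ dA h'
    have h3 : ∑ k, (x - lam k)⁻¹ * a k = ∑ k, (x - lam k)⁻¹ * b k := by linarith
    rw [← sub_eq_zero] at h3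
    rw [← h3, ← Finset.sum_sub_distrib]
    exact Finset.sum_congr rfl fun k _ => by ring
  set q : Polynomial ℝ :=
    ∑ k, Polynomial.C (a k - b k) * ∏ j ∈ Finset.univ.erase k, (Polynomial.X - Polynomial.C (lam j)) with hq
  have hqeval : ∀ x : ℝ, q.eval x
      = ∑ k, (a k - b k) * ∏ j ∈ Finset.univ.erase k, (x - lam j) := by
    intro x
    simp [hq, Polynomial.eval_finset_sum, Polynomial.eval_prod]
  have hq0 : q = 0 := by
    apply Polynomial.eq_zero_of_infinite_isRoot
    apply Set.Infinite.mono (s := (Set.range lam)ᶜ)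
    · intro x hx
      have hx' : ∀ k, x ≠ lam k := by
        intro k hk
        exact hx ⟨k, hk.symm⟩
      have hxk : ∀ k, x - lam k ≠ 0 := fun k => sub_ne_zero.2 (hx' k)
      have key : ∀ k : Fin s, (∏ j ∈ Finset.univ.erase k, (x - lam j))
          = (x - lam k)⁻¹ * ∏ j, (x - lam j) := by
        intro k
        rw [← Finset.mul_prod_erase Finset.univ _ (Finset.mem_univ k),
          ← mul_assoc, inv_mul_cancel₀ (hxk k), one_mul]
      show q.IsRoot x
      rw [Polynomial.IsRoot, hqeval x]
      calc ∑ k, (a k - b k) * ∏ j ∈ Finset.univ.erase k, (x - lam j)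
          = (∑ k, (x - lam k)⁻¹ * (a k - b k)) * ∏ j, (x - lam j) := by
            rw [Finset.sum_mul]
            exact Finset.sum_congr rfl fun k _ => by rw [key k]; ring
        _ = 0 := by rw [hsums x hx', zero_mul]
    · exact (Set.finite_range lam).infinite_compl
  intro k
  have hak : a k = b k := by
    have h0 : q.eval (lam k) = 0 := by rw [hq0]; simp
    rw [hqeval] at h0
    have h1 : ∑ i, (a i - b i) * ∏ j ∈ Finset.univ.erase i, (lam k - lam j)
        = (a k - b k) * ∏ j ∈ Finset.univ.erase k, (lam k - lam j) := by
      apply Finset.sum_eq_single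
      · intro i _ hik
        have : (∏ j ∈ Finset.univ.erase i, (lam k - lam j)) = 0 :=
          Finset.prod_eq_zero (Finset.mem_erase.2 ⟨Ne.symm hik, Finset.mem_univ k⟩) (sub_self _)
        rw [this, mul_zero]
      · intro h; exact absurd (Finset.mem_univ k) h
    rw [h1] at h0
    have hprod : (∏ j ∈ Finset.univ.erase k, (lam k - lam j)) ≠ 0 := by
      rw [Finset.prod_ne_zero_iff]
      intro j hj
      exact sub_ne_zero.2 fun h => (Finset.mem_erase.1 hj).1 (hlam h.symm)
    have := mul_eq_zero.1 h0
    rcases this with h | h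
    · linarith [sub_eq_zero.1 h]
    · exact absurd h hprod
  have gen : ∀ (m : ℕ) (M : Matrix (Fin n) (Fin m) ℝ) (v : Fin n → ℝ),
      (Mᵀ *ᵥ v) ⬝ᵥ (Mᵀ *ᵥ v) = v ⬝ᵥ (M * Mᵀ) *ᵥ v := by
    intro m M v
    rw [← Matrix.mulVec_mulVec, Matrix.dotProduct_mulVec v, Matrix.mulVec_transpose]
  rw [gen (r k) (P k) α, gen (r k) (R k) β]
  exact hak
end

section
/- Let A and B be similar real symmetric nonnegative n×n matrices with spectral decompositions A = Σ λ_k P_k P_k^T and B = Σ λ_k R_k R_k^T, and let α, α̃, β, β̃ be nonnegative vectors in ℝ^n. If A + αα^T ~ B + ββ^T, A + α̃α̃^T ~ B + β̃β̃^T, and A + αα^T + α̃α̃^T ~ B + ββ^T + β̃β̃^T (where ~ is similarity), then ⟨P_k^T α, P_k^T α̃⟩ = ⟨R_k^T β, R_k^T β̃⟩ for all k = 1,…,s. -/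
open Matrix
lemma eval_charpoly_eq {n : ℕ} (M : Matrix (Fin n) (Fin n) ℝ) (x : ℝ) :
    (M.charpoly).eval x = (x • (1 : Matrix (Fin n) (Fin n) ℝ) - M).det := by
  rw [Matrix.charpoly, eval_det, Matrix.matPolyEquiv_charmatrix]
  rw [Polynomial.eval_sub, Polynomial.eval_X, Polynomial.eval_C]
  congr 1
  ext i j
  simp [Matrix.scalar_apply, Matrix.smul_apply, Matrix.one_apply, Matrix.diagonal_apply]

lemma qform {n s : ℕ} {r : Fin s → ℕ} (P : ∀ k : Fin s, Matrix (Fin n) (Fin (r k)) ℝ)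
    (w : Fin s → ℝ) (u v : Fin n → ℝ) :
    u ⬝ᵥ ((∑ k, w k • (P k * (P k)ᵀ)) *ᵥ v)
      = ∑ k, w k * (((P k)ᵀ *ᵥ u) ⬝ᵥ ((P k)ᵀ *ᵥ v)) := by
  have hs : (∑ k, w k • (P k * (P k)ᵀ)) *ᵥ v = ∑ k, (w k • (P k * (P k)ᵀ)) *ᵥ v :=
    map_sum (Matrix.mulVec.addMonoidHomLeft v) _ _
  have hd : ∀ (g : Fin s → Fin n → ℝ), u ⬝ᵥ (∑ k, g k) = ∑ k, u ⬝ᵥ (g k) := by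
    intro g
    simp only [dotProduct, Finset.sum_apply, Finset.mul_sum]
    exact Finset.sum_comm ..
  rw [hs, hd]
  refine Finset.sum_congr rfl fun k _ => ?_
  rw [Matrix.smul_mulVec, dotProduct_smul, smul_eq_mul]
  congr 1
  rw [← Matrix.mulVec_mulVec, Matrix.dotProduct_mulVec, Matrix.mulVec_transpose,
    Matrix.mulVec_transpose]

lemma stmt9_resolvent {n s : ℕ} {A : Matrix (Fin n) (Fin n) ℝ} {lam : Fin s → ℝ} {r : Fin s → ℕ}
    {P : ∀ k : Fin s, Matrix (Fin n) (Fin (r k)) ℝ}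
    (hP2 : ∀ k, A * P k = lam k • P k)
    (hPcomp : ∑ k, P k * (P k)ᵀ = 1)
    {x : ℝ} (hx : ∀ k, x ≠ lam k) :
    (x • (1 : Matrix (Fin n) (Fin n) ℝ) - A) * (∑ k, (x - lam k)⁻¹ • (P k * (P k)ᵀ)) = 1 := by
  rw [Matrix.mul_sum]
  have hterm : ∀ k ∈ (Finset.univ : Finset (Fin s)),
      (x • (1 : Matrix (Fin n) (Fin n) ℝ) - A) * ((x - lam k)⁻¹ • (P k * (P k)ᵀ))
        = P k * (P k)ᵀ := by
    intro k _
    rw [Matrix.mul_smul, Matrix.sub_mul, Matrix.smul_mul, Matrix.one_mul,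
      ← Matrix.mul_assoc, hP2 k, Matrix.smul_mul, ← sub_smul, smul_smul,
      inv_mul_cancel₀ (sub_ne_zero.2 (hx k)), one_smul]
  rw [Finset.sum_congr rfl hterm, hPcomp]

lemma rank2_eval {n s : ℕ} {A : Matrix (Fin n) (Fin n) ℝ} {lam : Fin s → ℝ} {r : Fin s → ℕ}
    {P : ∀ k : Fin s, Matrix (Fin n) (Fin (r k)) ℝ}
    (hP2 : ∀ k, A * P k = lam k • P k)
    (hPcomp : ∑ k, P k * (P k)ᵀ = 1)
    (u v : Fin n → ℝ) {x : ℝ} (hx : ∀ k, x ≠ lam k)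
    (hd : (A.charpoly).eval x ≠ 0) :
    ((A + Matrix.vecMulVec u u + Matrix.vecMulVec v v).charpoly).eval x =
      (A.charpoly).eval x *
       ((1 - ∑ k, (x - lam k)⁻¹ * (((P k)ᵀ *ᵥ u) ⬝ᵥ ((P k)ᵀ *ᵥ u))) *
        (1 - ∑ k, (x - lam k)⁻¹ * (((P k)ᵀ *ᵥ v) ⬝ᵥ ((P k)ᵀ *ᵥ v))) -
        (∑ k, (x - lam k)⁻¹ * (((P k)ᵀ *ᵥ u) ⬝ᵥ ((P k)ᵀ *ᵥ v)))^2) := by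
  set N := x • (1 : Matrix (Fin n) (Fin n) ℝ) - A with hN
  set Q := ∑ k, (x - lam k)⁻¹ • (P k * (P k)ᵀ) with hQ
  have hres : N * Q = 1 := stmt9_resolvent hP2 hPcomp hx
  have hNdet : N.det ≠ 0 := by rw [hN, ← eval_charpoly_eq]; exact hd
  have hNinv : N⁻¹ = Q := Matrix.inv_eq_right_inv hres
  set C : Matrix (Fin n) (Fin 2) ℝ := Matrix.of fun i j => if j = 0 then u i else v i with hC
  have hCC : C * Cᵀ = Matrix.vecMulVec u u + Matrix.vecMulVec v v := by
    ext i j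
    simp [hC, Matrix.mul_apply, Fin.sum_univ_two, Matrix.vecMulVec_apply]
  have hLHS : x • (1 : Matrix (Fin n) (Fin n) ℝ)
      - (A + Matrix.vecMulVec u u + Matrix.vecMulVec v v) = N + C * (-Cᵀ) := by
    rw [Matrix.mul_neg, hCC, hN]; abel
  rw [eval_charpoly_eq, hLHS, Matrix.det_add_mul C (-Cᵀ) (isUnit_iff_ne_zero.2 hNdet),
    hNinv]
  have hdetN : N.det = (A.charpoly).eval x := (eval_charpoly_eq A x).symm
  rw [hdetN]
  congr 1
  have hG : (1 + -Cᵀ * Q * C : Matrix (Fin 2) (Fin 2) ℝ) = 1 - Cᵀ * Q * C := by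
    rw [Matrix.neg_mul, Matrix.neg_mul, ← sub_eq_add_neg]
  rw [hG]
  have hentry : ∀ a b : Fin n → ℝ, ∀ i j : Fin 2, (∀ p, C p i = a p) → (∀ p, C p j = b p) →
      (Cᵀ * Q * C) i j = ∑ k, (x - lam k)⁻¹ * (((P k)ᵀ *ᵥ a) ⬝ᵥ ((P k)ᵀ *ᵥ b)) := by
    intro a b i j hai hbj
    rw [← qform P (fun k => (x - lam k)⁻¹) a b, ← hQ]
    simp only [Matrix.mul_apply, Matrix.transpose_apply, dotProduct, Matrix.mulVec,
      Finset.sum_mul, Finset.mul_sum]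
    rw [Finset.sum_comm]
    refine Finset.sum_congr rfl fun p _ => Finset.sum_congr rfl fun q _ => ?_
    rw [hai, hbj]; ring
  have h00 := hentry u u 0 0 (fun p => by simp [hC]) (fun p => by simp [hC])
  have h01 := hentry u v 0 1 (fun p => by simp [hC]) (fun p => by simp [hC])
  have h10 := hentry v u 1 0 (fun p => by simp [hC]) (fun p => by simp [hC])
  have h11 := hentry v v 1 1 (fun p => by simp [hC]) (fun p => by simp [hC])
  rw [Matrix.det_fin_two]
  simp only [Matrix.sub_apply, Matrix.one_apply_eq, Matrix.one_apply_ne (by decide : (0 : Fin 2) ≠ 1),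
    Matrix.one_apply_ne (by decide : (1 : Fin 2) ≠ 0), h00, h01, h10, h11]
  have hcomm : ∑ k, (x - lam k)⁻¹ * (((P k)ᵀ *ᵥ v) ⬝ᵥ ((P k)ᵀ *ᵥ u))
      = ∑ k, (x - lam k)⁻¹ * (((P k)ᵀ *ᵥ u) ⬝ᵥ ((P k)ᵀ *ᵥ v)) :=
    Finset.sum_congr rfl fun k _ => by rw [dotProduct_comm]
  rw [hcomm]; ring

lemma stmt9_pow {n s : ℕ} {A : Matrix (Fin n) (Fin n) ℝ} (hA : A.IsSymm) {lam : Fin s → ℝ}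
    {r : Fin s → ℕ} {P : ∀ k : Fin s, Matrix (Fin n) (Fin (r k)) ℝ}
    (hP2 : ∀ k, A * P k = lam k • P k)
    (hPcomp : ∑ k, P k * (P k)ᵀ = 1) (m : ℕ) :
    A ^ m = ∑ k, (lam k ^ m) • (P k * (P k)ᵀ) := by
  induction m with
  | zero => simp [hPcomp]
  | succ m ih =>
    rw [pow_succ, ih, Matrix.sum_mul]
    refine Finset.sum_congr rfl fun k _ => ?_
    have hPA : (P k)ᵀ * A = lam k • (P k)ᵀ := by
      have := congrArg Matrix.transpose (hP2 k)
      rw [Matrix.transpose_mul, Matrix.transpose_smul, hA.eq] at this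
      exact this
    rw [Matrix.smul_mul, Matrix.mul_assoc, hPA, Matrix.mul_smul, smul_smul, ← pow_succ]

lemma stmt9_pow_nonneg {n : ℕ} {A : Matrix (Fin n) (Fin n) ℝ} (hAnn : ∀ i j, 0 ≤ A i j)
    (m : ℕ) : ∀ i j, 0 ≤ (A ^ m) i j := by
  induction m with
  | zero =>
    intro i j
    rw [pow_zero]
    by_cases h : i = j <;> simp [Matrix.one_apply, h]
  | succ m ih =>
    intro i j
    rw [pow_succ, Matrix.mul_apply]
    exact Finset.sum_nonneg fun p _ => mul_nonneg (ih i p) (hAnn p j)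

lemma stmt9_moment_nonneg {n : ℕ} {A : Matrix (Fin n) (Fin n) ℝ} (hAnn : ∀ i j, 0 ≤ A i j)
    {u v : Fin n → ℝ} (hu : ∀ i, 0 ≤ u i) (hv : ∀ i, 0 ≤ v i) (m : ℕ) :
    0 ≤ u ⬝ᵥ ((A ^ m) *ᵥ v) := by
  refine Finset.sum_nonneg fun i _ => mul_nonneg (hu i) ?_
  rw [Matrix.mulVec, dotProduct]
  exact Finset.sum_nonneg fun j _ => mul_nonneg (stmt9_pow_nonneg hAnn m i j) (hv j)

lemma stmt9_pf {s : ℕ} {lam : Fin s → ℝ} (hlam : Function.Injective lam)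
    (c d : Fin s → ℝ) (S : Set ℝ) (hS : S.Infinite)
    (hSlam : ∀ x ∈ S, ∀ k, x ≠ lam k)
    (hsq : ∀ x ∈ S, (∑ k, (x - lam k)⁻¹ * c k)^2 = (∑ k, (x - lam k)⁻¹ * d k)^2)
    (hmomc : ∀ m : ℕ, 0 ≤ ∑ k, lam k ^ m * c k)
    (hmomd : ∀ m : ℕ, 0 ≤ ∑ k, lam k ^ m * d k) :
    ∀ k, c k = d k := by
  classical
  set Pc : Polynomial ℝ := ∑ j, Polynomial.C (c j) *
    ∏ i ∈ Finset.univ.erase j, (Polynomial.X - Polynomial.C (lam i)) with hPcDef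
  set Pd : Polynomial ℝ := ∑ j, Polynomial.C (d j) *
    ∏ i ∈ Finset.univ.erase j, (Polynomial.X - Polynomial.C (lam i)) with hPdDef
  have hevalP : ∀ (e : Fin s → ℝ) (x : ℝ),
      Polynomial.eval x (∑ j, Polynomial.C (e j) *
        ∏ i ∈ Finset.univ.erase j, (Polynomial.X - Polynomial.C (lam i)))
      = ∑ j, e j * ∏ i ∈ Finset.univ.erase j, (x - lam i) := by
    intro e x
    rw [Polynomial.eval_finset_sum]
    refine Finset.sum_congr rfl fun j _ => ?_
    rw [Polynomial.eval_mul, Polynomial.eval_C, Polynomial.eval_prod]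
    simp
  have hevalgen : ∀ (e : Fin s → ℝ) (x : ℝ), (∀ k, x ≠ lam k) →
      (∑ j, e j * ∏ i ∈ Finset.univ.erase j, (x - lam i))
        = (∏ i, (x - lam i)) * ∑ k, (x - lam k)⁻¹ * e k := by
    intro e x hx
    rw [Finset.mul_sum]
    refine Finset.sum_congr rfl fun j _ => ?_
    rw [← Finset.mul_prod_erase Finset.univ _ (Finset.mem_univ j)]
    have hne : x - lam j ≠ 0 := sub_ne_zero.2 (hx j)
    field_simp
  have hsqpoly : Pc ^ 2 = Pd ^ 2 := by
    refine Polynomial.eq_of_infinite_eval_eq _ _ (hS.mono fun x hx => ?_)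
    simp only [Set.mem_setOf_eq, Polynomial.eval_pow]
    rw [hPcDef, hPdDef, hevalP, hevalP, hevalgen c x (hSlam x hx), hevalgen d x (hSlam x hx),
      mul_pow, mul_pow, hsq x hx]
  have hcases : Pc = Pd ∨ Pc = -Pd := by
    have h0 : (Pc - Pd) * (Pc + Pd) = 0 := by linear_combination hsqpoly
    rcases mul_eq_zero.1 h0 with h | h
    · exact Or.inl (sub_eq_zero.1 h)
    · exact Or.inr (eq_neg_of_add_eq_zero_left h)
  have hEne : ∀ k, (∏ i ∈ Finset.univ.erase k, (lam k - lam i)) ≠ 0 := by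
    intro k
    refine Finset.prod_ne_zero_iff.2 fun i hi => sub_ne_zero.2 fun h => ?_
    exact (Finset.mem_erase.1 hi).1 (hlam h.symm)
  have hevalat : ∀ (e : Fin s → ℝ) (k : Fin s),
      (∑ j, e j * ∏ i ∈ Finset.univ.erase j, (lam k - lam i))
        = e k * ∏ i ∈ Finset.univ.erase k, (lam k - lam i) := by
    intro e k
    refine Finset.sum_eq_single_of_mem k (Finset.mem_univ k) (fun j _ hjk => ?_)
    refine mul_eq_zero.2 (Or.inr (Finset.prod_eq_zero (Finset.mem_erase.2 ⟨Ne.symm hjk, Finset.mem_univ k⟩) ?_))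
    exact sub_self _
  rcases hcases with hcd | hcd
  · intro k
    have := congrArg (Polynomial.eval (lam k)) hcd
    rw [hPcDef, hPdDef, hevalP, hevalP, hevalat, hevalat] at this
    exact mul_right_cancel₀ (hEne k) this
  · have hcneg : ∀ k, c k = -d k := by
      intro k
      have := congrArg (Polynomial.eval (lam k)) hcd
      rw [Polynomial.eval_neg, hPcDef, hPdDef, hevalP, hevalP, hevalat, hevalat,
        ← neg_mul] at this
      exact mul_right_cancel₀ (hEne k) this
    have hzero : ∀ m : ℕ, ∑ k, lam k ^ m * c k = 0 := by
      intro m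
      have h1 : ∑ k, lam k ^ m * c k = -∑ k, lam k ^ m * d k := by
        rw [← Finset.sum_neg_distrib]
        exact Finset.sum_congr rfl fun k _ => by rw [hcneg k]; ring
      have := hmomd m
      have := hmomc m
      linarith [hmomc m, hmomd m, h1]
    intro k
    set q : Polynomial ℝ := ∏ i ∈ Finset.univ.erase k, (Polynomial.X - Polynomial.C (lam i))
      with hq
    have hevq : ∀ j, Polynomial.eval (lam j) q = ∏ i ∈ Finset.univ.erase k, (lam j - lam i) := by
      intro j; rw [hq, Polynomial.eval_prod]; simp
    have hsum0 : ∑ j, c j * Polynomial.eval (lam j) q = 0 := by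
      have hrange : ∀ j, Polynomial.eval (lam j) q
          = ∑ m ∈ Finset.range (q.natDegree + 1), q.coeff m * lam j ^ m := fun j =>
        Polynomial.eval_eq_sum_range _
      calc ∑ j, c j * Polynomial.eval (lam j) q
          = ∑ j, ∑ m ∈ Finset.range (q.natDegree + 1), c j * (q.coeff m * lam j ^ m) := by
            simp_rw [hrange, Finset.mul_sum]
        _ = ∑ m ∈ Finset.range (q.natDegree + 1), ∑ j, c j * (q.coeff m * lam j ^ m) :=
            Finset.sum_comm
        _ = ∑ m ∈ Finset.range (q.natDegree + 1), q.coeff m * ∑ j, lam j ^ m * c j := by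
            refine Finset.sum_congr rfl fun m _ => ?_
            rw [Finset.mul_sum]
            exact Finset.sum_congr rfl fun j _ => by ring
        _ = 0 := by simp [hzero]
    have hsum1 : ∑ j, c j * Polynomial.eval (lam j) q
        = c k * ∏ i ∈ Finset.univ.erase k, (lam k - lam i) := by
      rw [← hevq k]
      refine Finset.sum_eq_single_of_mem k (Finset.mem_univ k) (fun j _ hjk => ?_)
      refine mul_eq_zero.2 (Or.inr ?_)
      rw [hevq j]
      exact Finset.prod_eq_zero (Finset.mem_erase.2 ⟨hjk, Finset.mem_univ j⟩) (sub_self _)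
    have hck : c k = 0 := by
      have := hsum1 ▸ hsum0
      rcases mul_eq_zero.1 this with h | h
      · exact h
      · exact absurd h (hEne k)
    have hdk : d k = 0 := by
      have h := hcneg k
      rw [hck] at h
      linarith
    rw [hck, hdk]

lemma rank1_eval {n s : ℕ} {A : Matrix (Fin n) (Fin n) ℝ} {lam : Fin s → ℝ} {r : Fin s → ℕ}
    {P : ∀ k : Fin s, Matrix (Fin n) (Fin (r k)) ℝ}
    (hP2 : ∀ k, A * P k = lam k • P k)
    (hPcomp : ∑ k, P k * (P k)ᵀ = 1)
    (u : Fin n → ℝ) {x : ℝ} (hx : ∀ k, x ≠ lam k)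
    (hd : (A.charpoly).eval x ≠ 0) :
    ((A + Matrix.vecMulVec u u).charpoly).eval x =
      (A.charpoly).eval x *
       (1 - ∑ k, (x - lam k)⁻¹ * (((P k)ᵀ *ᵥ u) ⬝ᵥ ((P k)ᵀ *ᵥ u))) := by
  have h := rank2_eval hP2 hPcomp u 0 hx hd
  have h00 : Matrix.vecMulVec (0 : Fin n → ℝ) (0 : Fin n → ℝ) = (0 : Matrix (Fin n) (Fin n) ℝ) := by
    ext i j; simp [Matrix.vecMulVec_apply]
  rw [h00, add_zero] at h
  simpa using h

theorem stmt_9 (n s : ℕ) (A B : Matrix (Fin n) (Fin n) ℝ)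
    (hA : A.IsSymm) (hB : B.IsSymm)
    (hAnn : ∀ i j, 0 ≤ A i j) (hBnn : ∀ i j, 0 ≤ B i j)
    (lam : Fin s → ℝ) (hlam : Function.Injective lam)
    (r : Fin s → ℕ)
    (P : ∀ k : Fin s, Matrix (Fin n) (Fin (r k)) ℝ)
    (R : ∀ k : Fin s, Matrix (Fin n) (Fin (r k)) ℝ)
    (hP1 : ∀ k, (P k)ᵀ * P k = 1) (hR1 : ∀ k, (R k)ᵀ * R k = 1)
    (hP2 : ∀ k, A * P k = lam k • P k) (hR2 : ∀ k, B * R k = lam k • R k)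
    (hPsum : A = ∑ k, lam k • (P k * (P k)ᵀ))
    (hRsum : B = ∑ k, lam k • (R k * (R k)ᵀ))
    (hPcomp : ∑ k, P k * (P k)ᵀ = 1) (hRcomp : ∑ k, R k * (R k)ᵀ = 1)
    (α α' β β' : Fin n → ℝ)
    (hαnn : ∀ i, 0 ≤ α i) (hα'nn : ∀ i, 0 ≤ α' i)
    (hβnn : ∀ i, 0 ≤ β i) (hβ'nn : ∀ i, 0 ≤ β' i)
    (hsim : A.charpoly = B.charpoly)
    (h1 : (A + Matrix.vecMulVec α α).charpoly = (B + Matrix.vecMulVec β β).charpoly)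
    (h2 : (A + Matrix.vecMulVec α' α').charpoly = (B + Matrix.vecMulVec β' β').charpoly)
    (h3 : (A + Matrix.vecMulVec α α + Matrix.vecMulVec α' α').charpoly =
          (B + Matrix.vecMulVec β β + Matrix.vecMulVec β' β').charpoly) :
    ∀ k, ((P k)ᵀ.mulVec α) ⬝ᵥ ((P k)ᵀ.mulVec α') = ((R k)ᵀ.mulVec β) ⬝ᵥ ((R k)ᵀ.mulVec β') := by
    classical
  have hchar_ne : A.charpoly ≠ 0 := (Matrix.charpoly_monic A).ne_zero
  set Sb : Set ℝ := {x | (A.charpoly).eval x = 0} ∪ Set.range lam with hSb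
  have hSbfin : Sb.Finite :=
    (Polynomial.finite_setOf_isRoot hchar_ne).union (Set.finite_range lam)
  have hSinf : (Sbᶜ).Infinite := Set.Finite.infinite_compl hSbfin
  have hSprop : ∀ x ∈ Sbᶜ, ((A.charpoly).eval x ≠ 0 ∧ ∀ k, x ≠ lam k) := by
    intro x hx
    rw [Set.mem_compl_iff, hSb, Set.mem_union] at hx
    push_neg at hx
    refine ⟨hx.1, fun k h => hx.2 ⟨k, h.symm⟩⟩
  have hsq : ∀ x ∈ Sbᶜ,
      (∑ k, (x - lam k)⁻¹ * (((P k)ᵀ *ᵥ α) ⬝ᵥ ((P k)ᵀ *ᵥ α')))^2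
        = (∑ k, (x - lam k)⁻¹ * (((R k)ᵀ *ᵥ β) ⬝ᵥ ((R k)ᵀ *ᵥ β')))^2 := by
    intro x hx
    obtain ⟨hdA, hxl⟩ := hSprop x hx
    have hdB : (B.charpoly).eval x ≠ 0 := by rw [← hsim]; exact hdA
    have e1 := congrArg (Polynomial.eval x) h1
    have e2 := congrArg (Polynomial.eval x) h2
    have e3 := congrArg (Polynomial.eval x) h3
    rw [rank1_eval hP2 hPcomp α hxl hdA, rank1_eval hR2 hRcomp β hxl hdB, ← hsim] at e1
    rw [rank1_eval hP2 hPcomp α' hxl hdA, rank1_eval hR2 hRcomp β' hxl hdB, ← hsim] at e2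
    rw [rank2_eval hP2 hPcomp α α' hxl hdA, rank2_eval hR2 hRcomp β β' hxl hdB, ← hsim] at e3
    have f1 := mul_left_cancel₀ hdA e1
    have f2 := mul_left_cancel₀ hdA e2
    have f3 := mul_left_cancel₀ hdA e3
    rw [← f1, ← f2] at f3
    linarith
  have hmomc : ∀ m : ℕ, 0 ≤ ∑ k, lam k ^ m * (((P k)ᵀ *ᵥ α) ⬝ᵥ ((P k)ᵀ *ᵥ α')) := by
    intro m
    have hq := qform P (fun k => lam k ^ m) α α'
    rw [← stmt9_pow hA hP2 hPcomp m] at hq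
    rw [← hq]
    exact stmt9_moment_nonneg hAnn hαnn hα'nn m
  have hmomd : ∀ m : ℕ, 0 ≤ ∑ k, lam k ^ m * (((R k)ᵀ *ᵥ β) ⬝ᵥ ((R k)ᵀ *ᵥ β')) := by
    intro m
    have hq := qform R (fun k => lam k ^ m) β β'
    rw [← stmt9_pow hB hR2 hRcomp m] at hq
    rw [← hq]
    exact stmt9_moment_nonneg hBnn hβnn hβ'nn m
  exact stmt9_pf hlam _ _ _ hSinf (fun x hx => (hSprop x hx).2) hsq hmomc hmomd
end
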